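/- There exist no integers x, y, z₁, z₂, z₃ such that −2x² − 2y² − 2(z₁²+z₂²+z₃²) + 6xy + (4x+2y)(z₁+z₂+z₃) = 0 and 1 ≤ 7x + 4y + z₁ + z₂ + z₃ ≤ 4. -/

import Mathlib

/-!
Replacing z₁, z₂, z₃ by their mean raises D² without changing d = D·C, and bounds D² by
`-(2/3) reducedForm x y d`, a positive definite binary form in (x, y) shifted by d. Its real
minimum, at x = y = d/14, is -3d²/28, so D² = 0 confines (14x - d, 14y - d) to a small ellipse;
for |d| ≤ 4 this forces y = 0, and then 94x² - 20dx + d² ≤ 0 leaves only x = d = 0.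
-/

def reducedForm (x y d : ℤ) : ℤ :=
  94 * x ^ 2 + 92 * x * y + 31 * y ^ 2 - d * (20 * x + 11 * y) + d ^ 2

theorem three_mul_selfIntersection_add_two_mul_reducedForm (x y z₁ z₂ z₃ : ℤ) :
    3 * (-2 * x ^ 2 - 2 * y ^ 2 - 2 * (z₁ ^ 2 + z₂ ^ 2 + z₃ ^ 2) + 6 * x * y
        + (4 * x + 2 * y) * (z₁ + z₂ + z₃))
      + 2 * reducedForm x y (7 * x + 4 * y + z₁ + z₂ + z₃)
      = -2 * ((z₁ - z₂) ^ 2 + (z₁ - z₃) ^ 2 + (z₂ - z₃) ^ 2) := by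
  unfold reducedForm
  ring

theorem reducedForm_eq_sq_add_sq (x y d : ℤ) :
    18424 * reducedForm x y d
      = (94 * (14 * x - d) + 46 * (14 * y - d)) ^ 2 + 798 * (14 * y - d) ^ 2
        - 1974 * d ^ 2 := by
  unfold reducedForm
  ring

theorem y_eq_zero_of_reducedForm_nonpos {x y d : ℤ} (hd : |d| ≤ 4)
    (hG : reducedForm x y d ≤ 0) : y = 0 := by
  have hv : (14 * y - d) ^ 2 < 7 ^ 2 := by
    nlinarith [reducedForm_eq_sq_add_sq x y d,
      sq_nonneg (94 * (14 * x - d) + 46 * (14 * y - d)), sq_abs d, abs_nonneg d]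
  have hv' := abs_lt_of_sq_lt_sq' hv (by norm_num)
  have hd' := abs_le.mp hd
  omega

theorem d_eq_zero_of_reducedForm_nonpos {x y d : ℤ} (hd : |d| ≤ 4)
    (hG : reducedForm x y d ≤ 0) : d = 0 := by
  obtain rfl := y_eq_zero_of_reducedForm_nonpos hd hG
  unfold reducedForm at hG
  rcases eq_or_ne x 0 with rfl | hx
  · nlinarith
  · have hx' := abs_pos.mpr hx
    nlinarith [abs_mul_abs_self x, abs_mul d x, le_abs_self (d * x)]

/-- Proposition 4.5: no class `D` in the lattice `𝕃` with `D² = 0` and `1 ≤ D·C ≤ 4`. -/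
theorem stmt_9 :
    ¬ ∃ x y z₁ z₂ z₃ : ℤ,
      -2 * x ^ 2 - 2 * y ^ 2 - 2 * (z₁ ^ 2 + z₂ ^ 2 + z₃ ^ 2) + 6 * x * y
        + (4 * x + 2 * y) * (z₁ + z₂ + z₃) = 0 ∧
      1 ≤ 7 * x + 4 * y + z₁ + z₂ + z₃ ∧ 7 * x + 4 * y + z₁ + z₂ + z₃ ≤ 4 := by
  rintro ⟨x, y, z₁, z₂, z₃, hsq, h1, h4⟩
  have hG : reducedForm x y (7 * x + 4 * y + z₁ + z₂ + z₃) ≤ 0 := by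
    nlinarith [three_mul_selfIntersection_add_two_mul_reducedForm x y z₁ z₂ z₃,
      sq_nonneg (z₁ - z₂), sq_nonneg (z₁ - z₃), sq_nonneg (z₂ - z₃)]
  have hd := d_eq_zero_of_reducedForm_nonpos (abs_le.mpr ⟨by omega, by omega⟩) hG
  omega
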